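/- arXiv:1104.0232 — 4 statements merged into one kernel-verified Lean document; each statement's English description precedes it below -/
import Mathlib

section
/- For real numbers τ > 0, μ > 0 with τ ≠ μ, and any t ∈ ℝ, the inverse Fourier transform m_τ(t,μ) = (1/2π) ∫_ℝ e^{itη} / (η² + 2iτη − τ² + μ²) dη satisfies |m_τ(t,μ)| ≤ (1/μ) e^{−|τ−μ||t|}. -/
/-!
With `a = τ - μ` and `b = τ + μ` the denominator is `-(a - iη)(b - iη)`. The one-sided exponential
`h_c` (`e^{cx}` on the half-line where it decays) has Fourier transform `(c - 2πiξ)⁻¹`, so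
`h_a - h_b` has the integrable Fourier transform `(b - a) / ((a - 2πiξ)(b - 2πiξ))`. Fourier
inversion at `t`, after the substitution `η = 2πξ`, gives `m_τ(t, μ) = (h_b(t) - h_a(t)) / (2μ)`,
and `|h_c(t)| ≤ e^{-|c||t|}` together with `|a| ≤ b` gives the bound.
-/

open Real Complex MeasureTheory
open Set FourierTransform

/-- The sign is chosen so that the Fourier transform is `(z - 2πiξ)⁻¹` whatever the sign of
`z.re`. -/
noncomputable def oneSidedExp (z : ℂ) (x : ℝ) : ℂ :=
  if x ≤ 0 then (if 0 < z.re then cexp (z * x) else 0)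
  else (if 0 < z.re then 0 else -cexp (z * x))

section OneSidedExp

variable {z : ℂ}

theorem oneSidedExp_of_re_pos (hz : 0 < z.re) :
    oneSidedExp z = (Iic (0 : ℝ)).indicator fun x => cexp (z * x) := by
  ext x
  simp [oneSidedExp, indicator_apply, hz]

theorem oneSidedExp_of_re_nonpos (hz : z.re ≤ 0) :
    oneSidedExp z = (Ioi (0 : ℝ)).indicator fun x => -cexp (z * x) := by
  ext x
  simp only [oneSidedExp, indicator_apply, hz.not_gt, if_false, mem_Ioi]
  split_ifs <;> first | rfl | linarith

theorem norm_oneSidedExp_le (z : ℂ) (x : ℝ) : ‖oneSidedExp z x‖ ≤ rexp (-(|z.re| * |x|)) := by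
  rcases lt_or_ge 0 z.re with hz | hz
  · rw [oneSidedExp_of_re_pos hz]
    by_cases hx : x ≤ 0
    · simp [hx, Complex.norm_exp, abs_of_pos hz, abs_of_nonpos hx]
    · simp [hx, (Real.exp_pos _).le]
  · rw [oneSidedExp_of_re_nonpos hz]
    by_cases hx : 0 < x
    · simp [hx, Complex.norm_exp, abs_of_nonpos hz, abs_of_pos hx]
    · simp [hx, (Real.exp_pos _).le]

theorem integrable_oneSidedExp (hz : z.re ≠ 0) : Integrable (oneSidedExp z) := by
  rcases hz.lt_or_gt with hz | hz
  · rw [oneSidedExp_of_re_nonpos hz.le, integrable_indicator_iff measurableSet_Ioi]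
    exact (integrableOn_exp_mul_complex_Ioi hz 0).neg
  · rw [oneSidedExp_of_re_pos hz, integrable_indicator_iff measurableSet_Iic]
    exact integrableOn_exp_mul_complex_Iic hz 0

theorem integral_oneSidedExp (hz : z.re ≠ 0) : ∫ x, oneSidedExp z x = z⁻¹ := by
  rcases hz.lt_or_gt with hz | hz
  · rw [oneSidedExp_of_re_nonpos hz.le, integral_indicator measurableSet_Ioi, integral_neg,
      integral_exp_mul_complex_Ioi hz]
    simp [neg_div]
  · rw [oneSidedExp_of_re_pos hz, integral_indicator measurableSet_Iic,
      integral_exp_mul_complex_Iic hz]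
    simp

theorem cexp_mul_oneSidedExp {w : ℂ} (hw : w.re = 0) (x : ℝ) :
    cexp (w * x) * oneSidedExp z x = oneSidedExp (z + w) x := by
  have hre : (z + w).re = z.re := by simp [hw]
  simp only [oneSidedExp, hre]
  split_ifs <;> simp [← Complex.exp_add, add_mul, add_comm]

/-- Every `oneSidedExp z` jumps by `-1` at the origin, so these jumps cancel in a difference. -/
theorem continuous_oneSidedExp_sub (a b : ℂ) :
    Continuous fun x => oneSidedExp a x - oneSidedExp b x := by
  simp only [oneSidedExp, ite_sub_ite]
  refine Continuous.if_le ?_ ?_ continuous_id continuous_const fun x hx => ?_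
  · split_ifs <;> fun_prop
  · split_ifs <;> fun_prop
  · subst hx
    split_ifs <;> simp

end OneSidedExp

theorem fourier_oneSidedExp_sub {a b : ℂ} (ha : a.re ≠ 0) (hb : b.re ≠ 0) (ξ : ℝ) :
    𝓕 (fun x => oneSidedExp a x - oneSidedExp b x) ξ
      = (a - 2 * π * ξ * I)⁻¹ - (b - 2 * π * ξ * I)⁻¹ := by
  have hshift : ∀ z x, cexp (↑(-2 * π * x * ξ) * I) • oneSidedExp z x
      = oneSidedExp (z - 2 * π * ξ * I) x := by
    intro z x
    rw [smul_eq_mul, sub_eq_add_neg, ← cexp_mul_oneSidedExp (by simp)]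
    congr 2
    push_cast
    ring
  have ha' : (a - 2 * π * ξ * I).re ≠ 0 := by simpa using ha
  have hb' : (b - 2 * π * ξ * I).re ≠ 0 := by simpa using hb
  rw [Real.fourier_real_eq_integral_exp_smul]
  simp_rw [smul_sub, hshift]
  rw [integral_sub (integrable_oneSidedExp ha') (integrable_oneSidedExp hb'),
    integral_oneSidedExp ha', integral_oneSidedExp hb']

theorem norm_ofReal_sub_mul_I_sq (a η : ℝ) : ‖(a : ℂ) - η * I‖ ^ 2 = a ^ 2 + η ^ 2 := by
  rw [sub_eq_add_neg, ← neg_mul, ← ofReal_neg, norm_add_mul_I, sq_sqrt (by positivity), neg_sq]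

theorem integrable_inv_sq_add_sq {a : ℝ} (ha : a ≠ 0) :
    Integrable fun η : ℝ => (a ^ 2 + η ^ 2)⁻¹ := by
  refine ((integrable_inv_one_add_sq.comp_mul_left' (inv_ne_zero ha)).const_mul (a ^ 2)⁻¹).congr
    (ae_of_all _ fun η => ?_)
  field_simp

theorem integrable_inv_mul_sub_mul_I {a b : ℝ} (ha : a ≠ 0) (hb : b ≠ 0) :
    Integrable fun η : ℝ => (((a : ℂ) - η * I) * ((b : ℂ) - η * I))⁻¹ := by
  -- AM–GM bounds the product by the two integrable Lorentzians `(c ^ 2 + η ^ 2)⁻¹`.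
  refine (((integrable_inv_sq_add_sq ha).add (integrable_inv_sq_add_sq hb)).div_const 2).mono'
    (by fun_prop) (ae_of_all _ fun η => ?_)
  rw [Pi.add_apply, norm_inv, norm_mul, mul_inv, ← norm_ofReal_sub_mul_I_sq,
    ← norm_ofReal_sub_mul_I_sq, ← inv_pow, ← inv_pow]
  linarith [two_mul_le_add_sq ‖(a : ℂ) - η * I‖⁻¹ ‖(b : ℂ) - η * I‖⁻¹]

theorem integral_cexp_div_mul_sub_mul_I {a b : ℝ} (ha : a ≠ 0) (hb : b ≠ 0) (hab : a ≠ b)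
    (t : ℝ) :
    ∫ η : ℝ, cexp (I * t * η) / (((a : ℂ) - η * I) * ((b : ℂ) - η * I))
      = 2 * π / (b - a) * (oneSidedExp a t - oneSidedExp b t) := by
  set f : ℝ → ℂ := fun x => oneSidedExp a x - oneSidedExp b x
  set ψ : ℝ → ℂ := fun η => (((a : ℂ) - η * I) * ((b : ℂ) - η * I))⁻¹
  have ha' : (a : ℂ).re ≠ 0 := by simpa
  have hb' : (b : ℂ).re ≠ 0 := by simpa
  have hFf : 𝓕 f = fun ξ => ((b : ℂ) - a) * ψ (2 * π * ξ) := by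
    ext ξ
    have hna : (a : ℂ) - 2 * π * ξ * I ≠ 0 := fun h => ha (by simpa using congrArg re h)
    have hnb : (b : ℂ) - 2 * π * ξ * I ≠ 0 := fun h => hb (by simpa using congrArg re h)
    rw [fourier_oneSidedExp_sub ha' hb']
    simp only [ψ]
    push_cast
    field_simp
    ring
  have hFf_int : Integrable (𝓕 f) := hFf ▸
    ((integrable_inv_mul_sub_mul_I ha hb).comp_mul_left' (by positivity)).const_mul _
  have hinv : 𝓕⁻ (𝓕 f) t = f t :=
    ((integrable_oneSidedExp ha').sub (integrable_oneSidedExp hb')).fourierInv_fourier_eq hFf_int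
      (continuous_oneSidedExp_sub a b).continuousAt
  set G : ℝ → ℂ := fun η => cexp (I * t * η) / (((a : ℂ) - η * I) * ((b : ℂ) - η * I))
  have hintegrand : ∀ ξ : ℝ, cexp (↑(2 * π * inner ℝ ξ t) * I) • ((b - a : ℂ) * ψ (2 * π * ξ))
      = (b - a) * G (2 * π * ξ) := by
    intro ξ
    simp only [ψ, G, RCLike.inner_apply, conj_trivial, smul_eq_mul, div_eq_mul_inv]
    rw [mul_left_comm]
    congr 3
    push_cast
    ring
  rw [fourierInv_eq', hFf] at hinv
  simp_rw [hintegrand] at hinv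
  rw [integral_const_mul, Measure.integral_comp_mul_left G, abs_of_pos (by positivity)] at hinv
  have hba : (b : ℂ) - a ≠ 0 := sub_ne_zero.2 (by exact_mod_cast hab.symm)
  rw [show oneSidedExp a t - oneSidedExp b t = f t from rfl, ← hinv, real_smul]
  push_cast
  field_simp

/-- Lemma 2.2 (first part): the bound `|m_τ(t,μ)| ≤ (1/μ) e^{−|τ−μ||t|}` for the
inverse Fourier transform `m_τ(t,μ) = (1/2π) ∫ e^{itη} / (η² + 2iτη − τ² + μ²) dη`. -/
theorem stmt_0 (τ μ t : ℝ) (hτ : 0 < τ) (hμ : 0 < μ) (hne : τ ≠ μ) :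
    ‖(1 / (2 * (Real.pi : ℂ))) * ∫ η : ℝ, Complex.exp (Complex.I * (t : ℂ) * (η : ℂ)) /
        ((η : ℂ) ^ 2 + 2 * Complex.I * (τ : ℂ) * (η : ℂ) - (τ : ℂ) ^ 2 + (μ : ℂ) ^ 2)‖ ≤
      (1 / μ) * Real.exp (-(|τ - μ| * |t|)) := by
  have hden : ∀ η : ℝ, (η : ℂ) ^ 2 + 2 * I * τ * η - τ ^ 2 + μ ^ 2
      = -((((τ - μ : ℝ) : ℂ) - η * I) * (((τ + μ : ℝ) : ℂ) - η * I)) := by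
    intro η
    push_cast
    linear_combination (η : ℂ) ^ 2 * I_sq
  have hscalar : ∀ X : ℂ,
      1 / (2 * (π : ℂ)) * -(2 * π / (((τ + μ : ℝ) : ℂ) - ((τ - μ : ℝ) : ℂ)) * X)
        = -(((2 * μ)⁻¹ : ℝ) : ℂ) * X := by
    intro X
    push_cast
    field_simp
    ring
  have habs : |τ - μ| ≤ |τ + μ| := by
    rw [abs_of_pos (by positivity : 0 < τ + μ)]
    exact abs_le.2 ⟨by linarith, by linarith⟩
  have hexp : rexp (-(|τ + μ| * |t|)) ≤ rexp (-(|τ - μ| * |t|)) :=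
    exp_le_exp.2 (neg_le_neg (mul_le_mul_of_nonneg_right habs (abs_nonneg t)))
  simp_rw [hden, div_neg, integral_neg, integral_cexp_div_mul_sub_mul_I (sub_ne_zero.2 hne)
    (by positivity : τ + μ ≠ 0) (by linarith : τ - μ ≠ τ + μ) t, hscalar]
  rw [norm_mul, norm_neg, norm_real, norm_of_nonneg (by positivity)]
  calc (2 * μ)⁻¹ * ‖oneSidedExp (τ - μ : ℝ) t - oneSidedExp (τ + μ : ℝ) t‖
      ≤ (2 * μ)⁻¹ * (rexp (-(|τ - μ| * |t|)) + rexp (-(|τ + μ| * |t|))) := by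
        gcongr
        exact (norm_sub_le _ _).trans
          (add_le_add (norm_oneSidedExp_le _ t) (norm_oneSidedExp_le _ t))
    _ ≤ (2 * μ)⁻¹ * (2 * rexp (-(|τ - μ| * |t|))) := by gcongr; linarith
    _ = (1 / μ) * rexp (-(|τ - μ| * |t|)) := by field_simp
end

section
/- For n ≥ 3, τ ≥ 4, and t ≠ 0, one has ∫_0^{τ−2} r^{−2/n} e^{−(τ−r−2)|t|} dr + ∫_τ^∞ r^{−2/n} e^{−(r−τ)|t|} dr ≤ C |t|^{−1+2/n}, where C depends only on n. -/
open Real MeasureTheory intervalIntegral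

private lemma aux_exp_neg_le_rpow {y β : ℝ} (hy : 0 < y) (hβ1 : -1 ≤ β) (hβ0 : β ≤ 0) :
    Real.exp (-y) ≤ y ^ β := by
  rcases le_or_gt y 1 with h1 | h1
  · calc Real.exp (-y) ≤ 1 := by rw [Real.exp_le_one_iff]; linarith
      _ ≤ y ^ β := Real.one_le_rpow_of_pos_of_le_one_of_nonpos hy h1 hβ0
  · calc Real.exp (-y) = (Real.exp y)⁻¹ := by rw [Real.exp_neg]
      _ ≤ y⁻¹ := by
          have h2 := Real.add_one_le_exp y
          have h3 : y ≤ Real.exp y := by linarith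
          exact inv_anti₀ hy h3
      _ = y ^ (-1 : ℝ) := (Real.rpow_neg_one y).symm
      _ ≤ y ^ β := Real.rpow_le_rpow_of_exponent_le h1.le hβ1

private lemma first_bound {α l M : ℝ} (hα : 0 < α) (hα1 : α < 1) (hl : 0 < l) (hM : 0 < M) :
    (∫ r in (0:ℝ)..M, r ^ (-α) * Real.exp (-(M - r) * l)) ≤
      (1 / (1 - α) + 1 / α) * l ^ (α - 1) := by
  have hα1' : (0:ℝ) < 1 - α := by linarith
  set m : ℝ := M / 2 with hm_def
  have hm : 0 < m := by positivity
  have hmM : m ≤ M := by rw [hm_def]; linarith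
  have hMm : M - m = m := by rw [hm_def]; ring
  set h : ℝ → ℝ := fun r => r ^ (-α) * (M - r) ^ (α - 1) with hh_def
  have meas_h : Measurable h :=
    (measurable_id.pow_const _).mul ((measurable_const.sub measurable_id).pow_const _)
  -- integrability of r ^ (-α)
  have int_rpow : ∀ a b : ℝ, IntervalIntegrable (fun r : ℝ => r ^ (-α)) volume a b :=
    fun a b => intervalIntegrable_rpow' (by linarith)
  -- integrability of (M - r) ^ (α - 1) on m..M
  have int_sub : IntervalIntegrable (fun r : ℝ => (M - r) ^ (α - 1)) volume m M := by
    have := (intervalIntegrable_rpow' (a := 0) (b := m) (by linarith : (-1:ℝ) < α - 1)).comp_sub_left M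
    rw [sub_zero, hMm] at this
    exact this.symm
  -- integrability of h on 0..m
  have hh1 : IntervalIntegrable h volume 0 m := by
    apply ((int_rpow 0 m).const_mul (m ^ (α - 1))).mono_fun
      (meas_h.aestronglyMeasurable.restrict)
    filter_upwards [ae_restrict_mem measurableSet_uIoc] with x hx
    rw [Set.uIoc_of_le hm.le] at hx
    have hx0 : 0 < x := hx.1
    have hMx : m ≤ M - x := by rw [hm_def] at *; linarith [hx.2]
    have h1 : (M - x) ^ (α - 1) ≤ m ^ (α - 1) :=
      Real.rpow_le_rpow_of_nonpos hm hMx (by linarith)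
    have h2 : (0:ℝ) ≤ x ^ (-α) := Real.rpow_nonneg hx0.le _
    have h3 : (0:ℝ) ≤ (M - x) ^ (α - 1) := Real.rpow_nonneg (by linarith) _
    simp only [Real.norm_eq_abs, hh_def]
    rw [abs_of_nonneg (mul_nonneg h2 h3), abs_of_nonneg (mul_nonneg (Real.rpow_nonneg hm.le _) h2)]
    calc x ^ (-α) * (M - x) ^ (α - 1) ≤ x ^ (-α) * m ^ (α - 1) :=
          mul_le_mul_of_nonneg_left h1 h2
      _ = m ^ (α - 1) * x ^ (-α) := by ring
  -- integrability of h on m..M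
  have hh2 : IntervalIntegrable h volume m M := by
    apply (int_sub.const_mul (m ^ (-α))).mono_fun (meas_h.aestronglyMeasurable.restrict)
    filter_upwards [ae_restrict_mem measurableSet_uIoc] with x hx
    rw [Set.uIoc_of_le hmM] at hx
    have hx0 : 0 < x := lt_of_lt_of_le hm hx.1.le
    have h1 : x ^ (-α) ≤ m ^ (-α) :=
      Real.rpow_le_rpow_of_nonpos hm hx.1.le (by linarith)
    have h3 : (0:ℝ) ≤ (M - x) ^ (α - 1) := Real.rpow_nonneg (by linarith [hx.2]) _
    simp only [Real.norm_eq_abs, hh_def]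
    rw [abs_of_nonneg (mul_nonneg (Real.rpow_nonneg hx0.le _) h3),
      abs_of_nonneg (mul_nonneg (Real.rpow_nonneg hm.le _) h3)]
    exact mul_le_mul_of_nonneg_right h1 h3
  -- value of ∫ r^(-α) on 0..m
  have I1 : (∫ r in (0:ℝ)..m, r ^ (-α)) = m ^ (1 - α) / (1 - α) := by
    rw [integral_rpow (Or.inl (by linarith : (-1:ℝ) < -α))]
    rw [Real.zero_rpow (by linarith : -α + 1 ≠ 0)]
    rw [show -α + 1 = 1 - α from by ring, sub_zero]
  -- value of ∫ (M - r)^(α-1) on m..M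
  have I2 : (∫ r in m..M, (M - r) ^ (α - 1)) = m ^ α / α := by
    rw [intervalIntegral.integral_comp_sub_left (fun s : ℝ => s ^ (α - 1)) M, sub_self, hMm]
    rw [integral_rpow (Or.inl (by linarith : (-1:ℝ) < α - 1))]
    rw [Real.zero_rpow (by linarith : α - 1 + 1 ≠ 0)]
    rw [show α - 1 + 1 = α from by ring, sub_zero]
  -- bound ∫ h on 0..m
  have B1 : (∫ r in (0:ℝ)..m, h r) ≤ 1 / (1 - α) := by
    have := intervalIntegral.integral_mono_on hm.le hh1 ((int_rpow 0 m).const_mul (m ^ (α - 1)))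
      (fun x hx => by
        have hMx : m ≤ M - x := by rw [hm_def] at *; linarith [hx.2]
        have h1 : (M - x) ^ (α - 1) ≤ m ^ (α - 1) :=
          Real.rpow_le_rpow_of_nonpos hm hMx (by linarith)
        have h2 : (0:ℝ) ≤ x ^ (-α) := Real.rpow_nonneg hx.1 _
        calc x ^ (-α) * (M - x) ^ (α - 1) ≤ x ^ (-α) * m ^ (α - 1) :=
              mul_le_mul_of_nonneg_left h1 h2
          _ = m ^ (α - 1) * x ^ (-α) := by ring)
    calc (∫ r in (0:ℝ)..m, h r) ≤ ∫ r in (0:ℝ)..m, m ^ (α - 1) * r ^ (-α) := this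
      _ = m ^ (α - 1) * (m ^ (1 - α) / (1 - α)) := by
          rw [intervalIntegral.integral_const_mul, I1]
      _ = (m ^ (α - 1) * m ^ (1 - α)) / (1 - α) := by ring
      _ = 1 / (1 - α) := by
          rw [← Real.rpow_add hm, show α - 1 + (1 - α) = 0 from by ring, Real.rpow_zero]
  -- bound ∫ h on m..M
  have B2 : (∫ r in m..M, h r) ≤ 1 / α := by
    have := intervalIntegral.integral_mono_on hmM hh2 (int_sub.const_mul (m ^ (-α)))
      (fun x hx => by
        have h1 : x ^ (-α) ≤ m ^ (-α) :=
          Real.rpow_le_rpow_of_nonpos hm hx.1 (by linarith)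
        have h3 : (0:ℝ) ≤ (M - x) ^ (α - 1) := Real.rpow_nonneg (by linarith [hx.2]) _
        exact mul_le_mul_of_nonneg_right h1 h3)
    calc (∫ r in m..M, h r) ≤ ∫ r in m..M, m ^ (-α) * (M - r) ^ (α - 1) := this
      _ = m ^ (-α) * (m ^ α / α) := by rw [intervalIntegral.integral_const_mul, I2]
      _ = (m ^ (-α) * m ^ α) / α := by ring
      _ = 1 / α := by
          rw [← Real.rpow_add hm, show -α + α = 0 from by ring, Real.rpow_zero]
  have Ih : (∫ r in (0:ℝ)..M, h r) ≤ 1 / (1 - α) + 1 / α := by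
    rw [← intervalIntegral.integral_add_adjacent_intervals hh1 hh2]
    exact add_le_add B1 B2
  -- integrability of the original integrand
  set f : ℝ → ℝ := fun r => r ^ (-α) * Real.exp (-(M - r) * l) with hf_def
  have meas_f : Measurable f :=
    (measurable_id.pow_const _).mul
      (((measurable_const.sub measurable_id).neg.mul measurable_const).exp)
  have hf_int : IntervalIntegrable f volume 0 M := by
    apply (int_rpow 0 M).mono_fun (meas_f.aestronglyMeasurable.restrict)
    filter_upwards [ae_restrict_mem measurableSet_uIoc] with x hx
    rw [Set.uIoc_of_le hM.le] at hx
    have h2 : (0:ℝ) ≤ x ^ (-α) := Real.rpow_nonneg hx.1.le _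
    have hexp : Real.exp (-(M - x) * l) ≤ 1 := by
      rw [Real.exp_le_one_iff]
      have : 0 ≤ (M - x) * l := mul_nonneg (by linarith [hx.2]) hl.le
      linarith
    simp only [Real.norm_eq_abs, hf_def]
    rw [abs_of_nonneg (mul_nonneg h2 (Real.exp_pos _).le), abs_of_nonneg h2]
    calc x ^ (-α) * Real.exp (-(M - x) * l) ≤ x ^ (-α) * 1 :=
          mul_le_mul_of_nonneg_left hexp h2
      _ = x ^ (-α) := by ring
  have hg_int : IntervalIntegrable (fun r => l ^ (α - 1) * h r) volume 0 M :=
    (hh1.trans hh2).const_mul _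
  -- pointwise comparison a.e. on [0, M]
  have hae : ∀ᵐ x ∂(volume.restrict (Set.Icc (0:ℝ) M)), x ≠ M := by
    apply ae_restrict_of_ae
    rw [ae_iff]
    have : {x : ℝ | ¬ x ≠ M} = {M} := by ext x; simp
    rw [this]
    exact measure_singleton M
  have hcomp : (∫ r in (0:ℝ)..M, f r) ≤ ∫ r in (0:ℝ)..M, l ^ (α - 1) * h r := by
    apply intervalIntegral.integral_mono_ae_restrict hM.le hf_int hg_int
    filter_upwards [hae, ae_restrict_mem measurableSet_Icc] with x hxM hx
    have hxlt : x < M := lt_of_le_of_ne hx.2 hxM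
    have hy : 0 < (M - x) * l := mul_pos (by linarith) hl
    have hexp : Real.exp (-(M - x) * l) ≤ (M - x) ^ (α - 1) * l ^ (α - 1) := by
      have h1 : Real.exp (-((M - x) * l)) ≤ ((M - x) * l) ^ (α - 1) :=
        aux_exp_neg_le_rpow hy (by linarith) (by linarith)
      rw [Real.mul_rpow (by linarith) hl.le] at h1
      rw [show -(M - x) * l = -((M - x) * l) from by ring]
      exact h1
    have h2 : (0:ℝ) ≤ x ^ (-α) := Real.rpow_nonneg hx.1 _
    calc f x = x ^ (-α) * Real.exp (-(M - x) * l) := rfl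
      _ ≤ x ^ (-α) * ((M - x) ^ (α - 1) * l ^ (α - 1)) :=
          mul_le_mul_of_nonneg_left hexp h2
      _ = l ^ (α - 1) * h x := by rw [hh_def]; ring
  calc (∫ r in (0:ℝ)..M, r ^ (-α) * Real.exp (-(M - r) * l)) ≤
        ∫ r in (0:ℝ)..M, l ^ (α - 1) * h r := hcomp
    _ = l ^ (α - 1) * ∫ r in (0:ℝ)..M, h r := intervalIntegral.integral_const_mul _ _
    _ ≤ l ^ (α - 1) * (1 / (1 - α) + 1 / α) :=
        mul_le_mul_of_nonneg_left Ih (Real.rpow_nonneg hl.le _)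
    _ = (1 / (1 - α) + 1 / α) * l ^ (α - 1) := by ring

private lemma second_bound {α l τ : ℝ} (hα : 0 < α) (hα1 : α < 1) (hl : 0 < l) (hτ : 1 ≤ τ) :
    (∫ r in Set.Ioi τ, r ^ (-α) * Real.exp (-(r - τ) * l)) ≤
      Real.Gamma (1 - α) * l ^ (α - 1) := by
  have hτ0 : (0:ℝ) < τ := by linarith
  set F : ℝ → ℝ := fun s => s ^ ((1 - α) - 1) * Real.exp (-(l * s)) with hF_def
  have meas_F : Measurable F :=
    (measurable_id.pow_const _).mul ((measurable_const.mul measurable_id).neg.exp)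
  -- value of ∫ F on Ioi 0
  have hval : (∫ s in Set.Ioi (0:ℝ), F s) = (1 / l) ^ (1 - α) * Real.Gamma (1 - α) :=
    Real.integral_rpow_mul_exp_neg_mul_Ioi (by linarith) hl
  have hpow : (1 / l : ℝ) ^ (1 - α) = l ^ (α - 1) := by
    rw [one_div, ← Real.rpow_neg_one l, ← Real.rpow_mul hl.le]
    congr 1
    ring
  -- integrability of F on Ioi 0
  have hF_int : IntegrableOn F (Set.Ioi (0:ℝ)) := by
    rw [← Set.Ioc_union_Ioi_eq_Ioi (zero_le_one : (0:ℝ) ≤ 1), integrableOn_union]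
    constructor
    · have base : IntegrableOn (fun s : ℝ => s ^ ((1 - α) - 1)) (Set.Ioc (0:ℝ) 1) := by
        have := intervalIntegrable_rpow' (a := 0) (b := 1) (by linarith : (-1:ℝ) < (1 - α) - 1)
        rwa [intervalIntegrable_iff_integrableOn_Ioc_of_le zero_le_one] at this
      apply base.mono' (meas_F.aestronglyMeasurable.restrict)
      filter_upwards [ae_restrict_mem measurableSet_Ioc] with x hx
      have hx0 : (0:ℝ) < x := hx.1
      have hexp : Real.exp (-(l * x)) ≤ 1 := by
        rw [Real.exp_le_one_iff]
        have : 0 ≤ l * x := mul_nonneg hl.le hx0.le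
        linarith
      have h2 : (0:ℝ) ≤ x ^ ((1 - α) - 1) := Real.rpow_nonneg hx0.le _
      simp only [Real.norm_eq_abs, hF_def]
      rw [abs_of_nonneg (mul_nonneg h2 (Real.exp_pos _).le)]
      calc x ^ ((1 - α) - 1) * Real.exp (-(l * x)) ≤ x ^ ((1 - α) - 1) * 1 :=
            mul_le_mul_of_nonneg_left hexp h2
        _ = x ^ ((1 - α) - 1) := by ring
    · apply (exp_neg_integrableOn_Ioi 1 hl).mono' (meas_F.aestronglyMeasurable.restrict)
      filter_upwards [ae_restrict_mem measurableSet_Ioi] with x hx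
      have hx1 : (1:ℝ) ≤ x := hx.le
      have h1 : x ^ ((1 - α) - 1) ≤ 1 :=
        Real.rpow_le_one_of_one_le_of_nonpos hx1 (by linarith)
      have h2 : (0:ℝ) ≤ x ^ ((1 - α) - 1) := Real.rpow_nonneg (by linarith) _
      simp only [Real.norm_eq_abs, hF_def]
      rw [abs_of_nonneg (mul_nonneg h2 (Real.exp_pos _).le)]
      calc x ^ ((1 - α) - 1) * Real.exp (-(l * x)) ≤ 1 * Real.exp (-(l * x)) :=
            mul_le_mul_of_nonneg_right h1 (Real.exp_pos _).le
        _ = Real.exp (-l * x) := by rw [one_mul, neg_mul]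
  -- translation
  have hemb : MeasurableEmbedding (fun x : ℝ => x + τ) :=
    (Homeomorph.addRight τ).measurableEmbedding
  have hmp : MeasurePreserving (fun x : ℝ => x + τ) volume volume :=
    measurePreserving_add_right volume τ
  have hpre : (fun x : ℝ => x + τ) ⁻¹' (Set.Ioi τ) = Set.Ioi 0 := by
    ext x; simp
  have htrans : (∫ r in Set.Ioi τ, F (r - τ)) = ∫ s in Set.Ioi (0:ℝ), F s := by
    have := hmp.setIntegral_preimage_emb hemb (fun r => F (r - τ)) (Set.Ioi τ)
    rw [hpre] at this
    simp only [add_sub_cancel_right] at this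
    exact this.symm
  have hG_int : IntegrableOn (fun r => F (r - τ)) (Set.Ioi τ) := by
    have h1 : MeasurePreserving (fun x : ℝ => x + τ) (volume.restrict (Set.Ioi (0:ℝ)))
        (volume.restrict (Set.Ioi τ)) := by
      have := hmp.restrict_preimage_emb hemb (Set.Ioi τ)
      rwa [hpre] at this
    refine (h1.integrable_comp_emb hemb).mp ?_
    have heq : ((fun r => F (r - τ)) ∘ (fun x : ℝ => x + τ)) = F := by
      funext x; simp
    rw [heq]
    exact hF_int
  have hnn : 0 ≤ᵐ[volume.restrict (Set.Ioi τ)]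
      fun r => r ^ (-α) * Real.exp (-(r - τ) * l) := by
    filter_upwards [ae_restrict_mem measurableSet_Ioi] with x hx
    have hx0 : (0:ℝ) < x := lt_trans hτ0 hx
    positivity
  have hle : (fun r => r ^ (-α) * Real.exp (-(r - τ) * l)) ≤ᵐ[volume.restrict (Set.Ioi τ)]
      fun r => F (r - τ) := by
    filter_upwards [ae_restrict_mem measurableSet_Ioi] with x hx
    have hx0 : 0 < x - τ := sub_pos.mpr hx
    have h1 : x ^ (-α) ≤ (x - τ) ^ (-α) :=
      Real.rpow_le_rpow_of_nonpos hx0 (by linarith) (by linarith)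
    have hFx : F (x - τ) = (x - τ) ^ (-α) * Real.exp (-(x - τ) * l) := by
      simp only [hF_def]
      rw [show ((1:ℝ) - α) - 1 = -α from by ring,
        show -(l * (x - τ)) = -(x - τ) * l from by ring]
    rw [hFx]
    exact mul_le_mul_of_nonneg_right h1 (Real.exp_pos _).le
  calc (∫ r in Set.Ioi τ, r ^ (-α) * Real.exp (-(r - τ) * l))
      ≤ ∫ r in Set.Ioi τ, F (r - τ) := integral_mono_of_nonneg hnn hG_int hle
    _ = ∫ s in Set.Ioi (0:ℝ), F s := htrans
    _ = (1 / l) ^ (1 - α) * Real.Gamma (1 - α) := hval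
    _ = Real.Gamma (1 - α) * l ^ (α - 1) := by rw [hpow]; ring

/-- The integral bound used for (2.8): for `n ≥ 3`, `τ ≥ 4` and `t ≠ 0`,
`∫_0^{τ−2} r^{−2/n} e^{−(τ−r−2)|t|} dr + ∫_τ^∞ r^{−2/n} e^{−(r−τ)|t|} dr ≤ C |t|^{−1+2/n}`
with `C` depending only on `n`. -/
theorem stmt_4 (n : ℕ) (hn : 3 ≤ n) :
    ∃ C : ℝ, 0 < C ∧ ∀ τ t : ℝ, 4 ≤ τ → t ≠ 0 →
      (∫ r in (0:ℝ)..(τ - 2), r ^ (-(2 / (n : ℝ))) * Real.exp (-(τ - r - 2) * |t|)) +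
        (∫ r in Set.Ioi τ, r ^ (-(2 / (n : ℝ))) * Real.exp (-(r - τ) * |t|)) ≤
      C * |t| ^ (-1 + 2 / (n : ℝ)) := by
  have hn3 : (3:ℝ) ≤ (n:ℝ) := by exact_mod_cast hn
  set α : ℝ := 2 / (n:ℝ) with hα_def
  have hα : 0 < α := div_pos two_pos (by linarith)
  have hα1 : α < 1 := by rw [hα_def, div_lt_one (by linarith)]; linarith
  have hΓ : 0 < Real.Gamma (1 - α) := Real.Gamma_pos_of_pos (by linarith)
  have hpos1 : 0 < 1 / (1 - α) := one_div_pos.mpr (by linarith)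
  have hpos2 : 0 < 1 / α := one_div_pos.mpr hα
  refine ⟨Real.Gamma (1 - α) + (1 / (1 - α) + 1 / α), by linarith, ?_⟩
  intro τ t hτ ht
  have hl : 0 < |t| := abs_pos.mpr ht
  have hM : 0 < τ - 2 := by linarith
  have h1 := first_bound hα hα1 hl hM
  have h2 := second_bound hα hα1 hl (by linarith : (1:ℝ) ≤ τ)
  have e1 : (∫ r in (0:ℝ)..(τ - 2), r ^ (-α) * Real.exp (-(τ - r - 2) * |t|)) =
      ∫ r in (0:ℝ)..(τ - 2), r ^ (-α) * Real.exp (-((τ - 2) - r) * |t|) := by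
    apply intervalIntegral.integral_congr
    intro x _
    show x ^ (-α) * Real.exp (-(τ - x - 2) * |t|) = x ^ (-α) * Real.exp (-((τ - 2) - x) * |t|)
    rw [show -(τ - x - 2) = -((τ - 2) - x) from by ring]
  rw [show (-1 : ℝ) + α = α - 1 from by ring, e1]
  calc (∫ r in (0:ℝ)..(τ - 2), r ^ (-α) * Real.exp (-((τ - 2) - r) * |t|)) +
        (∫ r in Set.Ioi τ, r ^ (-α) * Real.exp (-(r - τ) * |t|))
      ≤ (1 / (1 - α) + 1 / α) * |t| ^ (α - 1) + Real.Gamma (1 - α) * |t| ^ (α - 1) :=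
        add_le_add h1 h2
    _ = (Real.Gamma (1 - α) + (1 / (1 - α) + 1 / α)) * |t| ^ (α - 1) := by ring
end

section
/- Let (X,μ) be a finite measure space, n ≥ 3, m₁, m₂ ∈ L^n(X), and let (G_τ)_{τ≥τ₀} be a family of linear operators satisfying ‖G_τ f‖_{L²} ≤ (C₀/τ)‖f‖_{L²} and ‖G_τ f‖_{L^{2n/(n−2)}} ≤ C₀‖f‖_{L^{2n/(n+2)}} for all f. Then the operator norm of f ↦ m₁ G_τ(m₂ f) on L²(X) tends to 0 as τ → ∞. -/
/-!
Split `mᵢ = aᵢ + bᵢ` with `aᵢ` bounded and `‖bᵢ‖_{Lⁿ} ≤ δ`. Then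
`m₁ G(m₂ f) = a₁ G(a₂ f) + a₁ G(b₂ f) + b₁ G(m₂ f)`. The first term is handled on `L²` by the
bound `C₀/τ`, which tends to zero; the other two by Hölder
(`1/2 = 1/n + (n-2)/(2n)` and `(n+2)/(2n) = 1/n + 1/2`) and the `L^{2n/(n+2)} → L^{2n/(n-2)}`
bound, which makes them `O(δ)` uniformly in `τ`.
-/

open MeasureTheory ENNReal Filter Topology

lemma MeasureTheory.MemLp.exists_eq_add_memLp_top_eLpNorm_le {X E : Type*} [MeasurableSpace X]
    {μ : Measure X} [NormedAddCommGroup E] {p : ℝ≥0∞} {m : X → E} (hm : MemLp m p μ) {δ : ℝ}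
    (hδ : 0 < δ) :
    ∃ a b : X → E, m = a + b ∧ MemLp a ∞ μ ∧ AEStronglyMeasurable b μ ∧
      eLpNorm a p μ ≤ eLpNorm m p μ ∧ eLpNorm b p μ ≤ ENNReal.ofReal δ := by
  -- The cut-off set comes from a measurable representative, while `m = a + b` must hold
  -- everywhere: the operators it is fed to do not respect a.e. equality.
  set m₀ := hm.1.mk m
  have hm₀ : StronglyMeasurable m₀ := hm.1.stronglyMeasurable_mk
  obtain ⟨M, hM0, hM⟩ := (hm.ae_eq hm.1.ae_eq_mk).eLpNorm_indicator_norm_ge_pos_le hm₀ hδ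
  set S := {x | M ≤ ‖m₀ x‖₊}
  have hS : MeasurableSet S := measurableSet_le measurable_const hm₀.nnnorm.measurable.subtype_coe
  refine ⟨Sᶜ.indicator m, S.indicator m, (Set.indicator_compl_add_self S m).symm,
    memLp_top_of_bound (hm.1.indicator hS.compl) M ?_, hm.1.indicator hS,
    MeasureTheory.eLpNorm_indicator_le m, ?_⟩
  · filter_upwards [hm.1.ae_eq_mk] with x hx
    by_cases hxS : x ∈ S
    · simp [hxS, hM0.le]
    · simp only [Set.indicator_of_mem (Set.mem_compl hxS), hx]
      simpa [S] using (not_le.1 hxS).le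
  · rwa [eLpNorm_congr_ae (hm.1.ae_eq_mk.indicator (s := S))]

section

variable {X 𝕜 : Type*} [MeasurableSpace X] {μ : Measure X} [NormedField 𝕜]

lemma eLpNorm_mul_map_mul_le {p q r₁ r₂ s : ℝ≥0∞} [HolderTriple r₁ q p] [HolderTriple r₂ p s]
    (G : (X → 𝕜) → X → 𝕜) {C : ℝ≥0∞} {φ ψ f : X → 𝕜} (hφ : AEStronglyMeasurable φ μ)
    (hψ : AEStronglyMeasurable ψ μ) (hf : AEStronglyMeasurable f μ)
    (hGm : AEStronglyMeasurable (G fun y => ψ y * f y) μ)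
    (hG : eLpNorm (G fun y => ψ y * f y) q μ ≤ C * eLpNorm (fun y => ψ y * f y) s μ) :
    eLpNorm (fun x => φ x * G (fun y => ψ y * f y) x) p μ ≤
      eLpNorm φ r₁ μ * C * eLpNorm ψ r₂ μ * eLpNorm f p μ :=
  calc eLpNorm (fun x => φ x * G (fun y => ψ y * f y) x) p μ
      ≤ eLpNorm φ r₁ μ * eLpNorm (G fun y => ψ y * f y) q μ :=
        eLpNorm_smul_le_mul_eLpNorm (f := G fun y => ψ y * f y) (φ := φ) (p := r₁) hGm hφ
    _ ≤ eLpNorm φ r₁ μ * (C * (eLpNorm ψ r₂ μ * eLpNorm f p μ)) := by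
        have hψf : eLpNorm (fun y => ψ y * f y) s μ ≤ eLpNorm ψ r₂ μ * eLpNorm f p μ :=
          eLpNorm_smul_le_mul_eLpNorm (f := f) (φ := ψ) hf hψ
        grw [hG, hψf]
    _ = eLpNorm φ r₁ μ * C * eLpNorm ψ r₂ μ * eLpNorm f p μ := by ring

lemma eLpNorm_mul_map_mul_le_add {p : ℝ≥0∞} (hp : 1 ≤ p) (G : (X → 𝕜) →ₗ[𝕜] X → 𝕜)
    (hG : ∀ g, AEStronglyMeasurable (G g) μ) {m₁ m₂ a₁ b₁ a₂ b₂ f : X → 𝕜}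
    (h₁ : m₁ = a₁ + b₁) (h₂ : m₂ = a₂ + b₂)
    (ha₁ : AEStronglyMeasurable a₁ μ) (hb₁ : AEStronglyMeasurable b₁ μ) :
    eLpNorm (fun x => m₁ x * G (fun y => m₂ y * f y) x) p μ ≤
      eLpNorm (fun x => a₁ x * G (fun y => a₂ y * f y) x) p μ +
        eLpNorm (fun x => a₁ x * G (fun y => b₂ y * f y) x) p μ +
        eLpNorm (fun x => b₁ x * G (fun y => m₂ y * f y) x) p μ := by
  have hG₂ : G (fun y => m₂ y * f y) = G (fun y => a₂ y * f y) + G (fun y => b₂ y * f y) := by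
    rw [← map_add]; congr 1; ext y; simp [h₂, add_mul]
  have hsum : (fun x => m₁ x * G (fun y => m₂ y * f y) x) =
      (fun x => a₁ x * G (fun y => a₂ y * f y) x) + (fun x => a₁ x * G (fun y => b₂ y * f y) x) +
        fun x => b₁ x * G (fun y => m₂ y * f y) x := by
    ext x
    simp only [hG₂, h₁, Pi.add_apply]
    ring
  rw [hsum]
  refine (eLpNorm_add_le ((ha₁.mul (hG _)).add (ha₁.mul (hG _))) (hb₁.mul (hG _)) hp).trans ?_
  exact add_le_add_left (eLpNorm_add_le (ha₁.mul (hG _)) (ha₁.mul (hG _)) hp) _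

end

lemma ENNReal.inv_eq_div_mul (a : ℝ≥0∞) {c : ℝ≥0∞} (hc0 : c ≠ 0) (hc : c ≠ ∞) :
    a⁻¹ = c / (c * a) := by
  rw [ENNReal.div_eq_inv_mul, ENNReal.mul_inv (.inl hc0) (.inl hc), mul_right_comm,
    ENNReal.inv_mul_cancel hc0 hc, one_mul]

lemma ENNReal.holderTriple_two_mul_div_sub_two (n : ℕ) (hn : 2 ≤ n) :
    HolderTriple n ((2 * n : ℝ≥0∞) / ((n : ℝ≥0∞) - 2)) 2 := by
  have hn0 : (n : ℝ≥0∞) ≠ 0 := by simp; omega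
  constructor
  rw [ENNReal.inv_div (.inr (by finiteness)) (.inr (by simpa using hn0)),
    inv_eq_div_mul _ two_ne_zero ofNat_ne_top, ENNReal.div_add_div_same,
    add_tsub_cancel_of_le (by exact_mod_cast hn), mul_comm, inv_eq_div_mul _ hn0 (by simp)]

lemma ENNReal.holderTriple_two_mul_div_add_two (n : ℕ) (hn : 2 ≤ n) :
    HolderTriple n 2 ((2 * n : ℝ≥0∞) / ((n : ℝ≥0∞) + 2)) := by
  have hn0 : (n : ℝ≥0∞) ≠ 0 := by simp; omega
  constructor
  rw [ENNReal.inv_div (.inr (by finiteness)) (.inr (by simpa using hn0)),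
    inv_eq_div_mul _ two_ne_zero ofNat_ne_top, inv_eq_div_mul 2 hn0 (by simp),
    mul_comm (n : ℝ≥0∞), ENNReal.div_add_div_same, add_comm]

lemma ENNReal.eventually_mul_ofReal_lt {α : Type*} {l : Filter α} {g : α → ℝ}
    (hg : Tendsto g l (𝓝 0)) {K e : ℝ≥0∞} (hK : K ≠ ∞) (he : e ≠ 0) :
    ∀ᶠ x in l, K * ENNReal.ofReal (g x) < e := by
  have hlim : Tendsto (fun x => K * ENNReal.ofReal (g x)) l (𝓝 0) := by
    simpa using ENNReal.Tendsto.const_mul (ENNReal.tendsto_ofReal hg) (.inr hK)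
  exact hlim.eventually (gt_mem_nhds (pos_iff_ne_zero.2 he))

theorem stmt_7_general {X : Type*} [MeasurableSpace X] (μ : Measure X)
    (n : ℕ) (hn : 3 ≤ n) (τ₀ C₀ : ℝ)
    (G : ℝ → (X → ℂ) →ₗ[ℂ] (X → ℂ))
    (hGmeas : ∀ τ (f : X → ℂ), AEStronglyMeasurable (G τ f) μ)
    (hG2 : ∀ τ, τ₀ ≤ τ → ∀ f : X → ℂ,
      eLpNorm (G τ f) 2 μ ≤ ENNReal.ofReal (C₀ / τ) * eLpNorm f 2 μ)
    (hGp : ∀ τ, τ₀ ≤ τ → ∀ f : X → ℂ,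
      eLpNorm (G τ f) ((2 * n : ℝ≥0∞) / ((n : ℝ≥0∞) - 2)) μ ≤
        ENNReal.ofReal C₀ * eLpNorm f ((2 * n : ℝ≥0∞) / ((n : ℝ≥0∞) + 2)) μ)
    (m₁ m₂ : X → ℂ) (hm₁ : MemLp m₁ (n : ℝ≥0∞) μ) (hm₂ : MemLp m₂ (n : ℝ≥0∞) μ) :
    ∀ ε : ℝ, 0 < ε → ∃ T : ℝ, ∀ τ, T ≤ τ → ∀ f : X → ℂ, MemLp f 2 μ →
      eLpNorm (fun x => m₁ x * G τ (fun y => m₂ y * f y) x) 2 μ ≤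
        ENNReal.ofReal ε * eLpNorm f 2 μ := by
  intro ε hε
  have := holderTriple_two_mul_div_sub_two n (by omega)
  have := holderTriple_two_mul_div_add_two n (by omega)
  have hε2 : ENNReal.ofReal ε / 2 ≠ 0 := by simpa using hε
  have hK : ENNReal.ofReal C₀ * (eLpNorm m₁ n μ + eLpNorm m₂ n μ) ≠ ∞ := by
    finiteness [hm₁.2.ne, hm₂.2.ne]
  obtain ⟨δ, hδsmall, hδ⟩ := ((eventually_mul_ofReal_lt (l := 𝓝[>] (0 : ℝ)) (g := fun δ => δ)
    (tendsto_id.mono_left nhdsWithin_le_nhds) hK hε2).and self_mem_nhdsWithin).exists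
  obtain ⟨a₁, b₁, h₁, ha₁, hb₁, ha₁n, hb₁n⟩ := hm₁.exists_eq_add_memLp_top_eLpNorm_le hδ
  obtain ⟨a₂, b₂, h₂, ha₂, hb₂, -, hb₂n⟩ := hm₂.exists_eq_add_memLp_top_eLpNorm_le hδ
  have hτ_eventually := eventually_mul_ofReal_lt (g := fun τ => C₀ / τ)
    (tendsto_const_nhds.div_atTop tendsto_id) (mul_ne_top ha₁.2.ne ha₂.2.ne) hε2
  obtain ⟨T, hT⟩ := eventually_atTop.1 (hτ_eventually.and (eventually_ge_atTop τ₀))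
  refine ⟨T, fun τ hτ f hf => ?_⟩
  obtain ⟨hτsmall, hτ₀⟩ := hT τ hτ
  set F := eLpNorm f 2 μ
  calc _ ≤ _ := eLpNorm_mul_map_mul_le_add one_le_two (G τ) (hGmeas τ) h₁ h₂ ha₁.1 hb₁
    _ ≤ eLpNorm a₁ ∞ μ * ENNReal.ofReal (C₀ / τ) * eLpNorm a₂ ∞ μ * F +
          eLpNorm a₁ n μ * ENNReal.ofReal C₀ * eLpNorm b₂ n μ * F +
          eLpNorm b₁ n μ * ENNReal.ofReal C₀ * eLpNorm m₂ n μ * F := by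
        gcongr ?_ + ?_ + ?_
        · exact eLpNorm_mul_map_mul_le (G τ) ha₁.1 ha₂.1 hf.1 (hGmeas τ _) (hG2 τ hτ₀ _)
        · exact eLpNorm_mul_map_mul_le (G τ) ha₁.1 hb₂ hf.1 (hGmeas τ _) (hGp τ hτ₀ _)
        · exact eLpNorm_mul_map_mul_le (G τ) hb₁ hm₂.1 hf.1 (hGmeas τ _) (hGp τ hτ₀ _)
    _ ≤ eLpNorm a₁ ∞ μ * ENNReal.ofReal (C₀ / τ) * eLpNorm a₂ ∞ μ * F +
          eLpNorm m₁ n μ * ENNReal.ofReal C₀ * ENNReal.ofReal δ * F +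
          ENNReal.ofReal δ * ENNReal.ofReal C₀ * eLpNorm m₂ n μ * F := by
        gcongr
    _ = (eLpNorm a₁ ∞ μ * eLpNorm a₂ ∞ μ * ENNReal.ofReal (C₀ / τ) +
          ENNReal.ofReal C₀ * (eLpNorm m₁ n μ + eLpNorm m₂ n μ) * ENNReal.ofReal δ) * F := by
        ring
    _ ≤ (ENNReal.ofReal ε / 2 + ENNReal.ofReal ε / 2) * F := by gcongr
    _ = ENNReal.ofReal ε * F := by rw [ENNReal.add_halves]

/-- Lemma 3.3, limit (3.2): with the family of operators `G_τ` satisfying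
`‖G_τ f‖_{L²} ≤ (C₀/τ)‖f‖_{L²}` and `‖G_τ f‖_{L^{2n/(n−2)}} ≤ C₀ ‖f‖_{L^{2n/(n+2)}}`
for `τ ≥ τ₀`, and `m₁, m₂ ∈ Lⁿ` on a finite measure space, the operator norm of
`f ↦ m₁ G_τ(m₂ f)` on `L²` tends to `0` as `τ → ∞`. -/
theorem stmt_7 {X : Type*} [MeasurableSpace X] (μ : Measure X) [IsFiniteMeasure μ]
    (n : ℕ) (hn : 3 ≤ n) (τ₀ C₀ : ℝ) (hτ₀ : 0 < τ₀) (hC₀ : 0 ≤ C₀)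
    (G : ℝ → (X → ℂ) →ₗ[ℂ] (X → ℂ))
    (hGmeas : ∀ τ (f : X → ℂ), AEStronglyMeasurable (G τ f) μ)
    (hG2 : ∀ τ, τ₀ ≤ τ → ∀ f : X → ℂ,
      eLpNorm (G τ f) 2 μ ≤ ENNReal.ofReal (C₀ / τ) * eLpNorm f 2 μ)
    (hGp : ∀ τ, τ₀ ≤ τ → ∀ f : X → ℂ,
      eLpNorm (G τ f) ((2 * n : ℝ≥0∞) / ((n : ℝ≥0∞) - 2)) μ ≤
        ENNReal.ofReal C₀ * eLpNorm f ((2 * n : ℝ≥0∞) / ((n : ℝ≥0∞) + 2)) μ)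
    (m₁ m₂ : X → ℂ) (hm₁ : MemLp m₁ (n : ℝ≥0∞) μ) (hm₂ : MemLp m₂ (n : ℝ≥0∞) μ) :
    ∀ ε : ℝ, 0 < ε → ∃ T : ℝ, ∀ τ, T ≤ τ → ∀ f : X → ℂ, MemLp f 2 μ →
      eLpNorm (fun x => m₁ x * G τ (fun y => m₂ y * f y) x) 2 μ ≤
        ENNReal.ofReal ε * eLpNorm f 2 μ :=
  stmt_7_general μ n hn τ₀ C₀ G hGmeas hG2 hGp m₁ m₂ hm₁ hm₂
end

section
/- Suppose for each ε ≤ ε₀ and all u ∈ C_0^∞(K), K ⊂ ℝⁿ compact, one has the Carleman estimate ‖e^{τ(x₁+x₁²/2ε)} u‖_{L^{2n/(n−2)}} ≤ C_K ‖e^{τ(x₁+x₁²/2ε)} Δu‖_{L^{2n/(n+2)}} for all τ ≥ 1. Then for all μ ≥ 1 and u ∈ C_0^∞(K) one has ‖e^{μx₁} u‖_{L^{2n/(n−2)}} ≤ C_{K,ε} ‖e^{μx₁} Δu‖_{L^{2n/(n+2)}}. -/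
open Real MeasureTheory ENNReal

/-- The Euclidean Laplacian of `u : ℝⁿ → ℝ`, `Δu(x) = Σᵢ ∂²u/∂xᵢ²(x)`. -/
noncomputable def euclideanLaplacian (n : ℕ) (u : (Fin n → ℝ) → ℝ) : (Fin n → ℝ) → ℝ :=
  fun x => ∑ i : Fin n, iteratedFDeriv ℝ 2 u x ![Pi.single i 1, Pi.single i 1]

lemma aux_eLpNorm_comp_smul {n : ℕ} (g : (Fin n → ℝ) → ℝ) (hg : Continuous g)
    (c : ℝ) (hc : 0 < c) (p : ℝ≥0∞) :
    eLpNorm (fun x => g (c • x)) p (volume : Measure (Fin n → ℝ))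
      = (ENNReal.ofReal ((c ^ n)⁻¹)) ^ (1 / p).toReal * eLpNorm g p volume := by
  have hmap : Measure.map (c • ·) (volume : Measure (Fin n → ℝ))
      = ENNReal.ofReal ((c ^ n)⁻¹) • volume := by
    rw [MeasureTheory.Measure.map_addHaar_smul (volume : Measure (Fin n → ℝ)) hc.ne']
    congr 2
    rw [Module.finrank_fin_fun, abs_of_nonneg (by positivity)]
  have h1 : eLpNorm (fun x => g (c • x)) p volume
      = eLpNorm g p (Measure.map (c • ·) volume) := by
    rw [eLpNorm_map_measure (hg.aestronglyMeasurable)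
      ((continuous_const_smul c).measurable.aemeasurable)]
    rfl
  rw [h1, hmap, eLpNorm_smul_measure_of_ne_zero
    (ENNReal.ofReal_pos.mpr (by positivity)).ne', smul_eq_mul]

lemma aux_lap_comp_smul {n : ℕ} (u : (Fin n → ℝ) → ℝ) (hu : ContDiff ℝ (⊤ : ℕ∞) u)
    (c : ℝ) (x : Fin n → ℝ) :
    euclideanLaplacian n (fun y => u (c • y)) x = c ^ 2 * euclideanLaplacian n u (c • x) := by
  set L : (Fin n → ℝ) →L[ℝ] (Fin n → ℝ) := c • ContinuousLinearMap.id ℝ (Fin n → ℝ) with hL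
  have hcomp : (fun y => u (c • y)) = u ∘ L := rfl
  unfold euclideanLaplacian
  rw [Finset.mul_sum]
  refine Finset.sum_congr rfl fun i _ => ?_
  rw [hcomp, L.iteratedFDeriv_comp_right hu x (by exact WithTop.coe_le_coe.mpr le_top),
    ContinuousMultilinearMap.compContinuousLinearMap_apply]
  have h2 : (fun j : Fin 2 => L (![Pi.single i 1, Pi.single i 1] j))
      = fun j : Fin 2 => (fun _ : Fin 2 => c) j •
        ((![Pi.single i 1, Pi.single i 1] : Fin 2 → (Fin n → ℝ)) j) := rfl
  rw [h2, ContinuousMultilinearMap.map_smul_univ]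
  simp [hL, smul_eq_mul, sq]

lemma aux_cont_lap {n : ℕ} {u : (Fin n → ℝ) → ℝ} (hu : ContDiff ℝ (⊤ : ℕ∞) u) :
    Continuous (euclideanLaplacian n u) := by
  unfold euclideanLaplacian
  exact continuous_finset_sum _ fun i _ =>
    (continuous_eval_const _).comp (hu.continuous_iteratedFDeriv (by exact WithTop.coe_le_coe.mpr le_top))

lemma aux_lap_zero {n : ℕ} {u : (Fin n → ℝ) → ℝ} {x : Fin n → ℝ} (hx : x ∉ tsupport u) :
    euclideanLaplacian n u x = 0 := by
  unfold euclideanLaplacian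
  have h : iteratedFDeriv ℝ 2 u x = 0 := by
    by_contra h
    exact hx (support_iteratedFDeriv_subset 2 h)
  simp [h]

/-- Scaling remark: if the Carleman estimate with the convexified weight
`e^{τ(x₁+x₁²/2ε)}` holds for all `ε ≤ ε₀`, all `τ ≥ 1` and all `u ∈ C₀^∞(K)` (with `K`
compact, star-shaped about the origin), then the linear-weight Carleman estimate
`‖e^{μx₁}u‖_{L^{2n/(n−2)}} ≤ C_{K,ε} ‖e^{μx₁}Δu‖_{L^{2n/(n+2)}}` holds for all `μ ≥ 1`
and `u ∈ C₀^∞(K)`. -/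
theorem stmt_11 (n : ℕ) (hn : 3 ≤ n) (K : Set (Fin n → ℝ)) (hK : IsCompact K)
    (hKstar : ∀ c : ℝ, 0 < c → c ≤ 1 → ∀ x ∈ K, c • x ∈ K)
    (ε₀ C_K : ℝ) (hε₀ : 0 < ε₀)
    (H : ∀ ε : ℝ, 0 < ε → ε ≤ ε₀ → ∀ u : (Fin n → ℝ) → ℝ, ContDiff ℝ (⊤ : ℕ∞) u →
      tsupport u ⊆ K → ∀ τ : ℝ, 1 ≤ τ →
      eLpNorm (fun x => Real.exp (τ * (x ⟨0, by omega⟩ + (x ⟨0, by omega⟩) ^ 2 / (2 * ε))) * u x)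
          ((2 * n : ℝ≥0∞) / ((n : ℝ≥0∞) - 2)) volume ≤
        ENNReal.ofReal C_K *
          eLpNorm (fun x => Real.exp (τ * (x ⟨0, by omega⟩ + (x ⟨0, by omega⟩) ^ 2 / (2 * ε))) *
              euclideanLaplacian n u x)
            ((2 * n : ℝ≥0∞) / ((n : ℝ≥0∞) + 2)) volume) :
    ∀ ε : ℝ, 0 < ε → ε ≤ ε₀ → ∃ C : ℝ, 0 < C ∧
      ∀ μ : ℝ, 1 ≤ μ → ∀ u : (Fin n → ℝ) → ℝ, ContDiff ℝ (⊤ : ℕ∞) u → tsupport u ⊆ K →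
        eLpNorm (fun x => Real.exp (μ * x ⟨0, by omega⟩) * u x)
            ((2 * n : ℝ≥0∞) / ((n : ℝ≥0∞) - 2)) volume ≤
          ENNReal.ofReal C *
            eLpNorm (fun x => Real.exp (μ * x ⟨0, by omega⟩) * euclideanLaplacian n u x)
              ((2 * n : ℝ≥0∞) / ((n : ℝ≥0∞) + 2)) volume := by
  intro ε hε hεε₀
  have hn0 : 0 < n := by omega
  have i0 : Fin n := ⟨0, hn0⟩
  -- a radius bound for K
  obtain ⟨R, hRK⟩ := (Metric.isBounded_iff_subset_closedBall (0 : Fin n → ℝ)).mp hK.isBounded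
  obtain ⟨R, hR0, hRK⟩ : ∃ R : ℝ, 0 ≤ R ∧ K ⊆ Metric.closedBall 0 R :=
    ⟨max R 0, le_max_right _ _,
      hRK.trans (Metric.closedBall_subset_closedBall (le_max_left _ _))⟩
  set C₁ : ℝ := max C_K 1 with hC₁
  have hC₁pos : (0:ℝ) < C₁ := lt_of_lt_of_le one_pos (le_max_right _ _)
  refine ⟨C₁ * Real.exp (R ^ 2 / (2 * ε)), by positivity, ?_⟩
  intro μ hμ u hu hsupp
  have hμ0 : (0:ℝ) < μ := lt_of_lt_of_le one_pos hμ
  -- exponents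
  have hnR : (3:ℝ) ≤ (n:ℝ) := by exact_mod_cast hn
  have hn2 : (2:ℝ≥0∞) < (n:ℝ≥0∞) := by exact_mod_cast (by omega : (2:ℕ) < n)
  have hnne : (n:ℝ≥0∞) ≠ 0 := by exact_mod_cast (by omega : n ≠ 0)
  set p : ℝ≥0∞ := (2 * n : ℝ≥0∞) / ((n : ℝ≥0∞) - 2) with hp
  set q : ℝ≥0∞ := (2 * n : ℝ≥0∞) / ((n : ℝ≥0∞) + 2) with hq
  have hsp : (1/p).toReal = ((n:ℝ) - 2) / (2*(n:ℝ)) := by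
    rw [hp, one_div, ENNReal.inv_div (Or.inr (by finiteness)) (Or.inr (by
        exact mul_ne_zero two_ne_zero hnne)),
      ENNReal.toReal_div, ENNReal.toReal_sub_of_le hn2.le (by finiteness)]
    simp
  have hsq : (1/q).toReal = ((n:ℝ) + 2) / (2*(n:ℝ)) := by
    rw [hq, one_div, ENNReal.inv_div (Or.inr (by finiteness)) (Or.inr (by
        exact mul_ne_zero two_ne_zero hnne)),
      ENNReal.toReal_div, ENNReal.toReal_add (by finiteness) (by finiteness)]
    simp
  -- the scaled function
  set v : (Fin n → ℝ) → ℝ := fun x => u (μ • x) with hv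
  have hvCD : ContDiff ℝ (⊤ : ℕ∞) v :=
    hu.comp (μ • ContinuousLinearMap.id ℝ (Fin n → ℝ)).contDiff
  have hvsupp : tsupport v ⊆ K := by
    have hcl : IsClosed ((fun x : Fin n → ℝ => μ • x) ⁻¹' K) :=
      hK.isClosed.preimage (continuous_const_smul μ)
    have h1 : tsupport v ⊆ (fun x : Fin n → ℝ => μ • x) ⁻¹' K := by
      apply closure_minimal _ hcl
      intro x hx
      have hx' : u (μ • x) ≠ 0 := hx
      exact hsupp (subset_closure hx')
    intro x hx
    have h2 : μ • x ∈ K := h1 hx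
    have h3 := hKstar μ⁻¹ (by positivity) (inv_le_one_of_one_le₀ hμ) _ h2
    simpa [smul_smul, inv_mul_cancel₀ hμ0.ne'] using h3
  have HH := H ε hε hεε₀ v hvCD hvsupp (μ^2) (one_le_pow₀ hμ)
  set gfun : (Fin n → ℝ) → ℝ :=
    fun y => Real.exp (μ * y ⟨0, hn0⟩ + (y ⟨0, hn0⟩)^2 / (2*ε)) * u y with hgfun
  set hfun : (Fin n → ℝ) → ℝ :=
    fun y => Real.exp (μ * y ⟨0, hn0⟩ + (y ⟨0, hn0⟩)^2 / (2*ε)) * euclideanLaplacian n u y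
    with hhfun
  have e1 : (fun x : Fin n → ℝ =>
      Real.exp (μ^2 * (x ⟨0, hn0⟩ + (x ⟨0, hn0⟩)^2 / (2*ε))) * v x)
      = fun x => gfun (μ • x) := by
    funext x
    simp only [hgfun, hv, Pi.smul_apply, smul_eq_mul]
    rw [show μ * (μ * x ⟨0, hn0⟩) + (μ * x ⟨0, hn0⟩)^2/(2*ε)
      = μ^2 * (x ⟨0, hn0⟩ + (x ⟨0, hn0⟩)^2/(2*ε)) from by ring]
  have e2 : (fun x : Fin n → ℝ =>
      Real.exp (μ^2 * (x ⟨0, hn0⟩ + (x ⟨0, hn0⟩)^2 / (2*ε))) * euclideanLaplacian n v x)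
      = fun x => (μ^2) • hfun (μ • x) := by
    funext x
    simp only [hv, hhfun, smul_eq_mul]
    rw [aux_lap_comp_smul u hu μ x]
    simp only [Pi.smul_apply, smul_eq_mul]
    rw [show μ * (μ * x ⟨0, hn0⟩) + (μ * x ⟨0, hn0⟩)^2/(2*ε)
      = μ^2 * (x ⟨0, hn0⟩ + (x ⟨0, hn0⟩)^2/(2*ε)) from by ring]
    ring
  rw [show (fun x : Fin n → ℝ =>
        Real.exp (μ ^ 2 * (x ⟨0, by omega⟩ + x ⟨0, by omega⟩ ^ 2 / (2 * ε))) * v x)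
      = fun x => gfun (μ • x) from e1,
    show (fun x : Fin n → ℝ =>
        Real.exp (μ ^ 2 * (x ⟨0, by omega⟩ + x ⟨0, by omega⟩ ^ 2 / (2 * ε))) *
          euclideanLaplacian n v x)
      = fun x => (μ^2) • hfun (μ • x) from e2] at HH
  have hucont : Continuous u := hu.continuous
  have hgc : Continuous gfun := by
    apply Continuous.mul _ hucont
    exact Real.continuous_exp.comp (by fun_prop)
  have hhc : Continuous hfun := by
    apply Continuous.mul _ (aux_cont_lap hu)
    exact Real.continuous_exp.comp (by fun_prop)
  rw [aux_eLpNorm_comp_smul gfun hgc μ hμ0 p] at HH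
  have e3 : eLpNorm (fun x : Fin n → ℝ => (μ^2) • hfun (μ • x)) q volume
      = ENNReal.ofReal (μ^2) * eLpNorm (fun x => hfun (μ • x)) q volume := by
    rw [show (fun x : Fin n → ℝ => (μ^2) • hfun (μ • x))
        = (μ^2) • (fun x => hfun (μ • x)) from rfl,
      eLpNorm_const_smul, ← Real.enorm_eq_ofReal (by positivity : (0:ℝ) ≤ μ^2)]
  rw [e3, aux_eLpNorm_comp_smul hfun hhc μ hμ0 q] at HH
  -- the scaling factors match exactly
  have hkey : ENNReal.ofReal (μ^2) * ENNReal.ofReal ((μ^n)⁻¹) ^ (1/q).toReal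
      = ENNReal.ofReal ((μ^n)⁻¹) ^ (1/p).toReal := by
    rw [hsp, hsq, ENNReal.ofReal_rpow_of_pos (by positivity),
      ENNReal.ofReal_rpow_of_pos (by positivity), ← ENNReal.ofReal_mul (by positivity)]
    congr 1
    have hμn : (μ^n)⁻¹ = μ ^ (-(n:ℝ)) := by
      rw [← Real.rpow_natCast μ n, ← Real.rpow_neg hμ0.le]
    rw [hμn, ← Real.rpow_natCast μ 2, ← Real.rpow_mul hμ0.le, ← Real.rpow_mul hμ0.le,
      ← Real.rpow_add hμ0]
    congr 1
    have hnpos : (0:ℝ) < (n:ℝ) := by linarith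
    push_cast
    field_simp
    ring
  have hA0 : ENNReal.ofReal ((μ^n)⁻¹) ^ (1/p).toReal ≠ 0 :=
    (ENNReal.rpow_pos (ENNReal.ofReal_pos.mpr (by positivity)) ENNReal.ofReal_ne_top).ne'
  have hAt : ENNReal.ofReal ((μ^n)⁻¹) ^ (1/p).toReal ≠ ⊤ :=
    ENNReal.rpow_ne_top_of_nonneg
      (by rw [hsp]; exact div_nonneg (by linarith) (by linarith)) ENNReal.ofReal_ne_top
  have HG : eLpNorm gfun p volume ≤ ENNReal.ofReal C_K * eLpNorm hfun q volume := by
    refine (ENNReal.mul_le_mul_iff_right hA0 hAt).mp (HH.trans (le_of_eq ?_))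
    rw [← hkey]
    ring
  -- weight comparisons
  have step1 : eLpNorm (fun x : Fin n → ℝ => Real.exp (μ * x ⟨0, hn0⟩) * u x) p volume
      ≤ eLpNorm gfun p volume := by
    apply eLpNorm_mono
    intro x
    simp only [hgfun, Real.norm_eq_abs, abs_mul, Real.abs_exp]
    exact mul_le_mul_of_nonneg_right
      (Real.exp_le_exp.mpr (le_add_of_nonneg_right (by positivity))) (abs_nonneg _)
  set w : (Fin n → ℝ) → ℝ :=
    fun x => Real.exp (μ * x ⟨0, hn0⟩) * euclideanLaplacian n u x with hw
  have step2 : eLpNorm hfun q volume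
      ≤ ENNReal.ofReal (Real.exp (R^2/(2*ε))) * eLpNorm w q volume := by
    have hmono : eLpNorm hfun q volume
        ≤ eLpNorm (Real.exp (R^2/(2*ε)) • w) q volume := by
      apply eLpNorm_mono
      intro x
      by_cases hx : euclideanLaplacian n u x = 0
      · simp [hhfun, hw, hx]
      · have hxK : x ∈ K := by
          by_contra hxK
          exact hx (aux_lap_zero (fun hmem => hxK (hsupp hmem)))
        have hxR : |x ⟨0, hn0⟩| ≤ R := by
          have h1 : ‖x‖ ≤ R := by
            simpa using Metric.mem_closedBall.mp (hRK hxK)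
          exact le_trans (norm_le_pi_norm x ⟨0, hn0⟩) h1
        have hsq : (x ⟨0, hn0⟩)^2 ≤ R^2 := by
          rw [← sq_abs]
          exact pow_le_pow_left₀ (abs_nonneg _) hxR 2
        simp only [hhfun, hw, Pi.smul_apply, smul_eq_mul, Real.norm_eq_abs, abs_mul,
          Real.abs_exp, ← mul_assoc, abs_of_nonneg (Real.exp_pos _).le]
        apply mul_le_mul_of_nonneg_right _ (abs_nonneg _)
        rw [← Real.exp_add]
        apply Real.exp_le_exp.mpr
        have h5 : (x ⟨0, hn0⟩)^2 / (2*ε) ≤ R^2/(2*ε) := by gcongr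
        linarith
    calc eLpNorm hfun q volume ≤ eLpNorm (Real.exp (R^2/(2*ε)) • w) q volume := hmono
      _ = ENNReal.ofReal (Real.exp (R^2/(2*ε))) * eLpNorm w q volume := by
          rw [eLpNorm_const_smul, ← Real.enorm_eq_ofReal (Real.exp_pos (R^2/(2*ε))).le]
  calc eLpNorm (fun x : Fin n → ℝ => Real.exp (μ * x ⟨0, hn0⟩) * u x) p volume
      ≤ eLpNorm gfun p volume := step1
    _ ≤ ENNReal.ofReal C_K * eLpNorm hfun q volume := HG
    _ ≤ ENNReal.ofReal C₁ * eLpNorm hfun q volume := by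
        exact mul_le_mul_left (ENNReal.ofReal_le_ofReal (le_max_left _ _)) _
    _ ≤ ENNReal.ofReal C₁ * (ENNReal.ofReal (Real.exp (R^2/(2*ε))) * eLpNorm w q volume) :=
        mul_le_mul_right step2 _
    _ = ENNReal.ofReal (C₁ * Real.exp (R^2/(2*ε))) * eLpNorm w q volume := by
        rw [ENNReal.ofReal_mul hC₁pos.le, mul_assoc]
end
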